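/- For any representable clone (S, C), the category obtained by restricting the associated multicategory to linear (unary) multimaps carries a cartesian (finite product) structure: the n-ary product of X₁,…,Xₙ is ⊗ₙ(X₁,…,Xₙ), the projections are the πᵢ induced by representability, and the tupling of unary maps fᵢ : A → Xᵢ is ρ[f₁,…,fₙ]; these satisfy the universal property of the product in this category. -/

import Mathlib

/-!
STATEMENT 6: For a representable clone, the linear (unary) restriction carries finite
products: `⊗ₙ(X₁,…,Xₙ)` with projections `πᵢ` (induced by representability) and
tupling `⟨f₁,…,fₙ⟩ := ρ[f₁,…,fₙ]` satisfies the universal property of the product.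
-/

universe u v

structure Clone (S : Type u) where
  hom : ∀ {n : ℕ}, (Fin n → S) → S → Type v
  proj : ∀ {n : ℕ} (X : Fin n → S) (i : Fin n), hom X (X i)
  subst : ∀ {n m : ℕ} {X : Fin n → S} {Y : Fin m → S} {B : S},
    hom X B → (∀ i, hom Y (X i)) → hom Y B
  subst_proj : ∀ {n m : ℕ} (X : Fin n → S) (Y : Fin m → S) (i : Fin n)
    (g : ∀ j, hom Y (X j)), subst (proj X i) g = g i
  subst_id : ∀ {n : ℕ} {X : Fin n → S} {B : S} (f : hom X B),
    subst f (proj X) = f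
  subst_assoc : ∀ {n m k : ℕ} {X : Fin n → S} {Y : Fin m → S} {Z : Fin k → S} {B : S}
    (f : hom X B) (g : ∀ i, hom Y (X i)) (h : ∀ j, hom Z (Y j)),
    subst (subst f g) h = subst f (fun i => subst (g i) h)

def unCtx {S : Type u} (A : S) : Fin 1 → S := fun _ => A

structure RepClone (S : Type u) extends Clone S where
  tensor : ∀ {n : ℕ}, (Fin n → S) → S
  rho : ∀ {n : ℕ} (X : Fin n → S), hom X (tensor X)
  representable : ∀ {n : ℕ} (X : Fin n → S) (A : S),
    Function.Bijective (fun h : hom (unCtx (tensor X)) A => subst h (fun _ => rho X))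

/-- Composition in the linear restriction (the category of unary multimaps):
`g ∘ f := g[f]`. -/
def Clone.lcomp {S : Type u} (C : Clone S) {A B D : S}
    (g : C.hom (unCtx B) D) (f : C.hom (unCtx A) B) : C.hom (unCtx A) D :=
  C.subst g (fun _ => f)

/-!
The projection `πᵢ` is the preimage of the clone projection `pᵢ` under the bijection
`h ↦ h[ρ]`, so `πᵢ[ρ] = pᵢ`. Then `πᵢ ∘ ρ[f] = πᵢ[ρ][f] = pᵢ[f] = fᵢ` by associativity of
substitution. For uniqueness, `ρ[π₁,…,πₙ]` and the identity of `⊗ₙ X` agree after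
substituting `ρ` (both give `ρ`), hence coincide by injectivity; so any `g` with
`πᵢ ∘ g = fᵢ` satisfies `g = ρ[π][g] = ρ[π₁ ∘ g,…,πₙ ∘ g] = ρ[f]`.
-/

namespace Clone

variable {S : Type u} (C : Clone S)

def lid (A : S) : C.hom (unCtx A) A :=
  C.proj (unCtx A) 0

theorem subst_lid {m : ℕ} {Y : Fin m → S} {B : S} (g : Fin 1 → C.hom Y B) :
    C.subst (C.lid B) g = g 0 :=
  C.subst_proj (unCtx B) Y 0 g

theorem lcomp_lid_left {A B : S} (f : C.hom (unCtx A) B) : C.lcomp (C.lid B) f = f :=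
  C.subst_lid fun _ => f

end Clone

namespace RepClone

variable {S : Type u} (C : RepClone S) {n : ℕ} (X : Fin n → S)

theorem unary_ext {A : S} {h h' : C.hom (unCtx (C.tensor X)) A}
    (hh' : C.subst h (fun _ => C.rho X) = C.subst h' (fun _ => C.rho X)) : h = h' :=
  (C.representable X A).injective hh'

noncomputable def tensorProj (i : Fin n) : C.hom (unCtx (C.tensor X)) (X i) :=
  Function.surjInv (C.representable X (X i)).surjective (C.proj X i)

theorem tensorProj_subst_rho (i : Fin n) :
    C.subst (C.tensorProj X i) (fun _ => C.rho X) = C.proj X i :=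
  Function.surjInv_eq (C.representable X (X i)).surjective (C.proj X i)

theorem tensorProj_lcomp_tuple {A : S} (f : ∀ i, C.hom (unCtx A) (X i)) (i : Fin n) :
    C.lcomp (C.tensorProj X i) (C.subst (C.rho X) f) = f i :=
  calc C.subst (C.tensorProj X i) (fun _ => C.subst (C.rho X) f)
      = C.subst (C.subst (C.tensorProj X i) (fun _ => C.rho X)) f :=
        (C.subst_assoc _ _ _).symm
    _ = f i := by rw [tensorProj_subst_rho, C.subst_proj]

theorem rho_subst_tensorProj :
    C.subst (C.rho X) (C.tensorProj X) = C.lid (C.tensor X) := by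
  apply C.unary_ext X
  calc C.subst (C.subst (C.rho X) (C.tensorProj X)) (fun _ => C.rho X)
      = C.subst (C.rho X) (C.proj X) :=
        (C.subst_assoc _ _ _).trans (congrArg _ (funext (C.tensorProj_subst_rho X)))
    _ = C.rho X := C.subst_id _
    _ = C.subst (C.lid (C.tensor X)) (fun _ => C.rho X) := (C.subst_lid fun _ => C.rho X).symm

theorem eq_tuple_of_tensorProj_lcomp {A : S} (f : ∀ i, C.hom (unCtx A) (X i))
    (g : C.hom (unCtx A) (C.tensor X)) (hg : ∀ i, C.lcomp (C.tensorProj X i) g = f i) :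
    g = C.subst (C.rho X) f :=
  calc g = C.lcomp (C.lid (C.tensor X)) g := (C.lcomp_lid_left g).symm
    _ = C.subst (C.subst (C.rho X) (C.tensorProj X)) (fun _ => g) := by
        rw [rho_subst_tensorProj]; rfl
    _ = C.subst (C.rho X) f := (C.subst_assoc _ _ _).trans (congrArg _ (funext hg))

end RepClone

/-- In the linear restriction of a representable clone, the object
`⊗ₙ(X₁,…,Xₙ)` is the `n`-ary product of `X₁,…,Xₙ`: there are projections `πᵢ`
(the unique extensions of the clone projections along `ρ`, i.e. `πᵢ[ρ] = pᵢ`) such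
that for any unary maps `fᵢ : A → Xᵢ` the tupling `ρ[f₁,…,fₙ]` satisfies the universal
property of the product: `πᵢ ∘ ρ[f₁,…,fₙ] = fᵢ`, and it is the unique such map. -/
theorem repClone_linear_restriction_products {S : Type u} (C : RepClone S) {n : ℕ}
    (X : Fin n → S) :
    ∃ π : ∀ i : Fin n, C.hom (unCtx (C.tensor X)) (X i),
      (∀ i, C.subst (π i) (fun _ => C.rho X) = C.proj X i) ∧
      ∀ (A : S) (f : ∀ i : Fin n, C.hom (unCtx A) (X i)),
        (∀ i, C.toClone.lcomp (π i) (C.subst (C.rho X) f) = f i) ∧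
        (∀ g : C.hom (unCtx A) (C.tensor X),
          (∀ i, C.toClone.lcomp (π i) g = f i) → g = C.subst (C.rho X) f) :=
  ⟨C.tensorProj X, C.tensorProj_subst_rho X, fun _ f =>
    ⟨C.tensorProj_lcomp_tuple X f, C.eq_tuple_of_tensorProj_lcomp X f⟩⟩
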